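/- arXiv:2512.05223 — 4 statements merged into one kernel-verified Lean document; each statement's English description precedes it below -/
import Mathlib

section
/- Let n ≥ 1, let G = K_n be the complete graph on vertices v_1,...,v_n, and let τ be a color set with |τ| ≥ 2n containing colors c_1,...,c_n,d_1,...,d_n. Let φ' and φ'' be any two proper τ-colorings of K_n such that the difference s = X(φ'') − X(φ') has connected support graph (V(s), E(s)) as in the circuit characterization. Then at most one color appears in φ'' that does not appear in φ'. -/
/-- The difference graph `G(s)` of a vector `s` on vertex-color pairs. -/
def diffGraph {V τ : Type*} (G : SimpleGraph V) (s : V × τ → ℝ) : SimpleGraph V where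
  Adj u v := G.Adj u v ∧ ∃ i, s (u, i) + s (v, i) = 0 ∧ s (u, i) ≠ 0
  symm := ⟨by
    rintro u v ⟨ha, i, hsum, hne⟩
    exact ⟨ha.symm, i, by linarith, fun h => hne (by linarith)⟩⟩
  loopless := ⟨fun v hv => G.loopless.irrefl v hv.1⟩

/-!
A color `φ'' v` that does not occur in `φ'` makes `v` a source of the digraph with an arc
`u → u'` whenever `u'` receives the old color of `u`, i.e. `φ'' u' = φ' u`. Every edge of the
difference graph carries such an arc in one direction, and since `φ'` is injective every vertex
has at most one in-neighbour. Hence the vertices reachable from a source in the difference graph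
are exactly those reached by directed paths out of it, and no second source is among them. As the
difference graph is connected on its support, there is only one source, i.e. one new color.
-/

namespace diffGraph

variable {V τ : Type*} [DecidableEq τ]

/-- The vector `X(φ'') - X(φ')` on vertex-color pairs. -/
def colorDiff (φ' φ'' : V → τ) : V × τ → ℝ := fun p =>
  (if φ'' p.1 = p.2 then 1 else 0) - (if φ' p.1 = p.2 then 1 else 0)

theorem colorDiff_ne_zero {φ' φ'' : V → τ} {v : V} (hv : φ' v ≠ φ'' v) :
    colorDiff φ' φ'' (v, φ'' v) ≠ 0 := by
  simp [colorDiff, hv]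

theorem adj_colorDiff {G : SimpleGraph V} {φ' φ'' : V → τ} {u u' : V}
    (h : (diffGraph G (colorDiff φ' φ'')).Adj u u') :
    φ'' u' = φ' u ∨ φ'' u = φ' u' := by
  obtain ⟨-, i, hsum, hne⟩ := h
  simp only [colorDiff] at hsum hne
  split_ifs at hsum hne <;> grind

theorem reflTransGen_of_reachable_of_notMem_range {G : SimpleGraph V} {φ' φ'' : V → τ}
    (hφ' : Function.Injective φ') {v w : V} (hv : φ'' v ∉ Set.range φ')
    (hvw : (diffGraph G (colorDiff φ' φ'')).Reachable v w) :
    Relation.ReflTransGen (fun u u' => φ'' u' = φ' u) v w := by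
  rw [SimpleGraph.reachable_iff_reflTransGen] at hvw
  induction hvw with
  | refl => exact .refl
  | @tail u u' _ hadj ih =>
    rcases adj_colorDiff hadj with h | h
    · exact ih.tail h
    · rcases ih.cases_tail with rfl | ⟨c, hvc, hcu⟩
      · exact absurd ⟨u', h.symm⟩ hv
      · exact hφ' (h.symm.trans hcu) ▸ hvc

theorem eq_of_reachable_of_notMem_range {G : SimpleGraph V} {φ' φ'' : V → τ}
    (hφ' : Function.Injective φ') {v w : V} (hv : φ'' v ∉ Set.range φ')
    (hw : φ'' w ∉ Set.range φ') (hvw : (diffGraph G (colorDiff φ' φ'')).Reachable v w) :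
    v = w := by
  rcases (reflTransGen_of_reachable_of_notMem_range hφ' hv hvw).cases_tail with h | ⟨u, -, hu⟩
  · exact h.symm
  · exact absurd ⟨u, hu.symm⟩ hw

end diffGraph

theorem stmt5_general {τ : Type*} [DecidableEq τ] (n : ℕ)
    (φ' φ'' : Fin n → τ)
    (h' : Function.Injective φ')
    (s : Fin n × τ → ℝ)
    (hs : s = fun p => (if φ'' p.1 = p.2 then (1 : ℝ) else 0) -
      (if φ' p.1 = p.2 then (1 : ℝ) else 0))
    (hconn : ∀ u w : Fin n, (∃ i, s (u, i) ≠ 0) → (∃ i, s (w, i) ≠ 0) →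
      (diffGraph (SimpleGraph.completeGraph (Fin n)) s).Reachable u w) :
    {x : τ | (∃ v, φ'' v = x) ∧ ¬ ∃ v, φ' v = x}.Subsingleton := by
  change s = diffGraph.colorDiff φ' φ'' at hs
  subst hs
  rintro _ ⟨⟨v, rfl⟩, hv⟩ _ ⟨⟨w, rfl⟩, hw⟩
  have hsupp : ∀ u, φ'' u ∉ Set.range φ' → ∃ i, diffGraph.colorDiff φ' φ'' (u, i) ≠ 0 :=
    fun u hu => ⟨φ'' u, diffGraph.colorDiff_ne_zero fun h => hu ⟨u, h⟩⟩
  rw [diffGraph.eq_of_reachable_of_notMem_range h' hv hw (hconn v w (hsupp v hv) (hsupp w hw))]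

/-- On the complete graph `K_n` with a color set of size at least `2n`, if two proper
colorings (i.e. injective color assignments) differ by a circuit — i.e. the difference
graph of `s = X(φ'') - X(φ')` is connected on its support — then at most one color
appears in `φ''` that does not appear in `φ'`. -/
theorem stmt5 {τ : Type*} [Fintype τ] [DecidableEq τ] (n : ℕ)
    (hcard : 2 * n ≤ Fintype.card τ)
    (c d : Fin n → τ) (hcd : Function.Injective (Sum.elim c d))
    (φ' φ'' : Fin n → τ)
    (h' : Function.Injective φ') (h'' : Function.Injective φ'')
    (s : Fin n × τ → ℝ)
    (hs : s = fun p => (if φ'' p.1 = p.2 then (1 : ℝ) else 0) -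
      (if φ' p.1 = p.2 then (1 : ℝ) else 0))
    (hconn : ∀ u w : Fin n, (∃ i, s (u, i) ≠ 0) → (∃ i, s (w, i) ≠ 0) →
      (diffGraph (SimpleGraph.completeGraph (Fin n)) s).Reachable u w) :
    {x : τ | (∃ v, φ'' v = x) ∧ ¬ ∃ v, φ' v = x}.Subsingleton :=
  stmt5_general n φ' φ'' h' s hs hconn
end

section
/- For every n there exist a graph G on n vertices, a color set τ, and proper τ-colorings φ₁, φ₂, such that any sequence of proper τ-colorings from φ₁ to φ₂ in which consecutive colorings differ by a circuit of the fractional coloring polytope has length at least n. In particular, take G = K_n, τ of size 2n with colors c_1,...,c_n,d_1,...,d_n, φ₁(v_i) = c_i and φ₂(v_i) = d_i. -/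
/-- The difference `X(φ') - X(φ)` of the characteristic vectors of two colorings. -/
def dv {V τ : Type*} [DecidableEq τ] (φ φ' : V → τ) : V × τ → ℝ :=
  fun p => (if φ' p.1 = p.2 then (1 : ℝ) else 0) - (if φ p.1 = p.2 then (1 : ℝ) else 0)

section DiffGraph

variable {V τ : Type*} [DecidableEq τ] {G : SimpleGraph V} {φ φ' : V → τ}

lemma dv_apply_ne_zero {v : V} (h : φ' v ≠ φ v) : dv φ φ' (v, φ' v) ≠ 0 := by
  simp [dv, Ne.symm h]

lemma diffGraph_dv_adj {u w : V} (h : (diffGraph G (dv φ φ')).Adj u w) :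
    φ' u = φ w ∨ φ' w = φ u := by
  obtain ⟨-, i, hsum, hne⟩ := h
  simp only [dv] at hsum hne
  -- `dv` is `±1` at `(u, i)` and `∓1` at `(w, i)`: `+1` at `u` means `φ' u = i = φ w`,
  -- `-1` at `u` means `φ u = i = φ' w`.
  split_ifs at hsum hne <;> simp_all

lemma reflTransGen_of_diffGraph_reachable (hφ : Function.Injective φ) {v₁ v₂ : V}
    (h₁ : φ' v₁ ∉ Set.range φ) (hreach : (diffGraph G (dv φ φ')).Reachable v₁ v₂) :
    Relation.ReflTransGen (fun u w => φ' u = φ w) v₂ v₁ := by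
  rw [SimpleGraph.reachable_iff_reflTransGen] at hreach
  induction hreach with
  | refl => exact .refl
  | tail _ hadj ih =>
    rcases diffGraph_dv_adj hadj with hxy | hyx
    · rcases ih.cases_head with rfl | ⟨c, hxc, hc⟩
      · exact absurd ⟨_, hxy.symm⟩ h₁
      · rwa [← hφ (hxc.symm.trans hxy)]
    · exact .head hyx ih

lemma eq_of_diffGraph_reachable (hφ : Function.Injective φ) {v₁ v₂ : V}
    (h₁ : φ' v₁ ∉ Set.range φ) (h₂ : φ' v₂ ∉ Set.range φ)
    (hreach : (diffGraph G (dv φ φ')).Reachable v₁ v₂) : v₁ = v₂ := by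
  rcases (reflTransGen_of_diffGraph_reachable hφ h₁ hreach).cases_head with h | ⟨c, h₂c, -⟩
  · exact h.symm
  · exact absurd ⟨c, h₂c.symm⟩ h₂

lemma card_image_sdiff_image_le_one [Fintype V] (hφ : Function.Injective φ)
    (hreach : ∀ u w : V, (∃ i, dv φ φ' (u, i) ≠ 0) → (∃ i, dv φ φ' (w, i) ≠ 0) →
      (diffGraph G (dv φ φ')).Reachable u w) :
    (Finset.univ.image φ' \ Finset.univ.image φ).card ≤ 1 := by
  have hsupp {v : V} (hv : φ' v ∉ Set.range φ) : ∃ i, dv φ φ' (v, i) ≠ 0 :=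
    ⟨_, dv_apply_ne_zero fun h => hv ⟨v, h.symm⟩⟩
  rw [Finset.card_le_one]
  simp only [Finset.mem_sdiff, Finset.mem_image, Finset.mem_univ, true_and, not_exists]
  rintro _ ⟨⟨v₁, rfl⟩, h₁⟩ _ ⟨⟨v₂, rfl⟩, h₂⟩
  have h₁' : φ' v₁ ∉ Set.range φ := by simpa using h₁
  have h₂' : φ' v₂ ∉ Set.range φ := by simpa using h₂
  rw [eq_of_diffGraph_reachable hφ h₁' h₂' (hreach _ _ (hsupp h₁') (hsupp h₂'))]

end DiffGraph

lemma card_sdiff_le_of_card_succ_sdiff_le_one {α : Type*} [DecidableEq α] {L : ℕ}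
    (C : Fin (L + 1) → Finset α) (hC : ∀ j : Fin L, (C j.succ \ C j.castSucc).card ≤ 1) :
    (C (Fin.last L) \ C 0).card ≤ L := by
  suffices ∀ i, (C i \ C 0).card ≤ i from this (Fin.last L)
  refine Fin.induction (by simp) fun j ih => ?_
  calc (C j.succ \ C 0).card
      ≤ (C j.succ \ C j.castSucc ∪ C j.castSucc \ C 0).card :=
        Finset.card_le_card (sdiff_triangle _ _ _)
    _ ≤ 1 + j := (Finset.card_union_le _ _).trans (add_le_add (hC j) ih)
    _ = j.succ := by simp [add_comm]

/-- On `G = K_n` with `2n` colors, any sequence of proper colorings from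
`φ₁ = (v_i ↦ c_i)` to `φ₂ = (v_i ↦ d_i)` in which consecutive colorings differ by a
circuit of the fractional coloring polytope (nonzero difference with connected difference
graph) has length at least `n`. -/
theorem stmt6 (n L : ℕ) (ψ : Fin (L + 1) → Fin n → Fin (2 * n))
    (hproper : ∀ j, Function.Injective (ψ j))
    (h0 : ψ 0 = fun v => ⟨v.1, by have := v.isLt; omega⟩)
    (hL : ψ (Fin.last L) = fun v => ⟨n + v.1, by have := v.isLt; omega⟩)
    (hstep : ∀ j : Fin L,
      ψ j.castSucc ≠ ψ j.succ ∧
      ∀ u w : Fin n,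
        (∃ i, dv (ψ j.castSucc) (ψ j.succ) (u, i) ≠ 0) →
        (∃ i, dv (ψ j.castSucc) (ψ j.succ) (w, i) ≠ 0) →
        (diffGraph (SimpleGraph.completeGraph (Fin n))
          (dv (ψ j.castSucc) (ψ j.succ))).Reachable u w) :
    n ≤ L := by
  set C : Fin (L + 1) → Finset (Fin (2 * n)) := fun j => Finset.univ.image (ψ j)
  have hchain := card_sdiff_le_of_card_succ_sdiff_le_one C fun j =>
    card_image_sdiff_image_le_one (hproper j.castSucc) (hstep j).2
  have hdisj : Disjoint (C (Fin.last L)) (C 0) := by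
    simp only [C, hL, h0, Finset.disjoint_left, Finset.mem_image, Finset.mem_univ, true_and]
    rintro _ ⟨v, rfl⟩ ⟨u, huv⟩
    have := congrArg Fin.val huv
    simp only at this
    omega
  have hcard : (C (Fin.last L)).card = n := by
    simp [C, Finset.card_image_of_injective _ (hproper _)]
  rwa [Finset.sdiff_eq_self_of_disjoint hdisj, hcard] at hchain
end

section
/- Let G = K_n and let τ be a color set with |τ| = n. For any two proper τ-colorings φ₁, φ₂ of K_n (necessarily bijections from vertices to colors), there exist proper τ-colorings ψ₀ = φ₁, ψ₁, ψ₂ = φ₂ (possibly with ψ₁ = φ₂) such that each difference X(ψ_{j+1}) − X(ψ_j) is a circuit of the fractional coloring polytope, i.e., its difference graph (V(s),E(s)) is connected. -/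
/-- A step from `φ` to `ψ` is a circuit step if the colorings differ and the difference
graph of `X(ψ) - X(φ)` is connected on its support. -/
def CircuitStep (n : ℕ) (φ ψ : Fin n → Fin n) : Prop :=
  φ ≠ ψ ∧ ∀ u w : Fin n,
    (∃ i, dv φ ψ (u, i) ≠ 0) → (∃ i, dv φ ψ (w, i) ≠ 0) →
    (diffGraph (SimpleGraph.completeGraph (Fin n)) (dv φ ψ)).Reachable u w

/-! With exactly `n` colors a proper coloring of `K_n` is a bijection, so `φ₂ = φ₁ ∘ g` for a
permutation `g`, and the difference graph of a step `φ ↦ φ ∘ f` is connected on its support as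
soon as `f` is a single cycle, whose consecutive points `u, f u` are adjacent in it. Every
permutation is a product of two cycles: if `l₁, …, l_k` are the disjoint cycles of `g` and
`x₁, …, x_k` their first entries, then `formPerm (l₁ ++ ⋯ ++ l_k) = formPerm [x₁, …, x_k] * g`,
so one extra cycle through a point of each cycle of `g` merges them all into one. -/

open Equiv Equiv.Perm Function

namespace List

variable {α : Type*}

theorem head?_filterMap_head? (L : List (List α)) :
    (L.filterMap head?).head? = L.flatten.head? := by
  induction L with
  | nil => rfl
  | cons l L ih => cases l <;> simp [filterMap_cons, ih]

theorem filterMap_head?_sublist_flatten (L : List (List α)) : L.filterMap head? <+ L.flatten := by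
  induction L with
  | nil => simp
  | cons l L ih =>
    cases l with
    | nil => simpa [filterMap_cons] using ih
    | cons x l => simpa using (ih.trans (sublist_append_right l _)).cons_cons x

variable [DecidableEq α]

theorem formPerm_disjoint_of_disjoint {l l' : List α} (h : l.Disjoint l') :
    (formPerm l).Disjoint (formPerm l') := fun a =>
  if ha : a ∈ l then .inr (formPerm_apply_of_notMem fun ha' => h ha ha')
  else .inl (formPerm_apply_of_notMem ha)

theorem formPerm_cons_append_cons {x y : α} {l m : List α} (h : (x :: l ++ y :: m).Nodup) :
    formPerm (x :: l ++ y :: m) = Equiv.swap x y * formPerm (x :: l) * formPerm (y :: m) := by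
  induction l generalizing x with
  | nil => simp
  | cons z l ih =>
    have hxz : x ≠ z := fun hxz => (nodup_cons.mp h).1 (by simp [hxz])
    have hxy : x ≠ y := fun hxy => (nodup_cons.mp h).1 (by simp [hxy])
    have hzy : z ≠ y := fun hzy => (nodup_cons.mp h.of_cons).1 (by simp [hzy])
    have hswap : Equiv.swap x z * Equiv.swap z y = Equiv.swap x y * Equiv.swap x z := by
      ext w
      simp only [Perm.mul_apply, swap_apply_def]
      split_ifs <;> simp_all
    calc formPerm (x :: z :: l ++ y :: m)
        = Equiv.swap x z * formPerm (z :: l ++ y :: m) := formPerm_cons_cons _ _ _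
      _ = Equiv.swap x z * (Equiv.swap z y * formPerm (z :: l) * formPerm (y :: m)) := by
        rw [ih h.of_cons]
      _ = Equiv.swap x y * formPerm (x :: z :: l) * formPerm (y :: m) := by
        simp only [formPerm_cons_cons x z, ← mul_assoc, hswap]

theorem formPerm_flatten {L : List (List α)} (h : L.flatten.Nodup) :
    L.flatten.formPerm = (L.filterMap head?).formPerm * (L.map formPerm).prod := by
  induction L with
  | nil => simp
  | cons l L ih =>
    rw [flatten_cons, nodup_append'] at h
    obtain ⟨hl, hL, hdisj⟩ := h
    rcases l with _ | ⟨x, l⟩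
    · simpa [filterMap_cons] using ih hL
    have hheads := head?_filterMap_head? L
    rcases hflat : L.flatten with _ | ⟨y, m⟩
    · rw [hflat, head?_nil, head?_eq_none_iff] at hheads
      have hprod : (L.map formPerm).prod = 1 := by simpa [hflat, hheads] using (ih hL).symm
      simp [hflat, hheads, hprod]
    rw [hflat, head?_cons, head?_eq_some_iff] at hheads
    obtain ⟨hs, hhs⟩ := hheads
    have hsub : y :: hs ⊆ L.flatten := hhs ▸ (filterMap_head?_sublist_flatten L).subset
    have hcomm : Commute (formPerm (x :: l)) (formPerm (y :: hs)) :=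
      (formPerm_disjoint_of_disjoint fun a ha ha' => hdisj ha (hsub ha')).commute
    rw [hflat] at hL hdisj ih
    rw [flatten_cons, hflat, filterMap_cons_some (f := head?) rfl, hhs, map_cons, prod_cons,
      formPerm_cons_append_cons (nodup_append'.mpr ⟨hl, hL, hdisj⟩), ih hL, hhs,
      formPerm_cons_cons]
    simp only [mul_assoc, hcomm.left_comm]

theorem Nodup.formPerm_eq_one_or_isCycle {l : List α} (hl : l.Nodup) :
    l.formPerm = 1 ∨ l.formPerm.IsCycle := by
  rcases le_or_gt l.length 1 with h | h
  · exact .inl ((formPerm_eq_one_iff _ hl).mpr h)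
  · exact .inr (isCycle_formPerm hl h)

end List

namespace Equiv.Perm

variable {α : Type*} [DecidableEq α] [Fintype α]

theorem IsCycle.exists_formPerm_eq {σ : Perm α} (hσ : σ.IsCycle) :
    ∃ l : List α, l.Nodup ∧ (∀ a ∈ l, a ∈ σ.support) ∧ l.formPerm = σ := by
  obtain ⟨x, hx, -⟩ := id hσ
  refine ⟨σ.toList x, nodup_toList σ x, fun a ha => ?_, ?_⟩
  · obtain ⟨hxa, hx⟩ := mem_toList_iff.mp ha
    exact hxa.mem_support_iff.mp hx
  · rw [formPerm_toList, hσ.cycleOf_eq hx]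

theorem exists_prod_map_formPerm (g : Perm α) :
    ∃ L : List (List α), L.flatten.Nodup ∧ (∀ a ∈ L.flatten, a ∈ g.support) ∧
      (L.map List.formPerm).prod = g := by
  induction g using cycle_induction_on with
  | base_one => exact ⟨[], by simp⟩
  | base_cycles σ hσ =>
    obtain ⟨l, hl, hsupp, rfl⟩ := hσ.exists_formPerm_eq
    exact ⟨[l], by simpa using hl, by simpa using hsupp, by simp⟩
  | induction_disjoint σ τ hdisj hσ _ ihτ =>
    obtain ⟨l, hl, hlsupp, rfl⟩ := hσ.exists_formPerm_eq
    obtain ⟨L, hL, hLsupp, rfl⟩ := ihτ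
    refine ⟨l :: L, ?_, ?_, by simp⟩
    · rw [List.flatten_cons, List.nodup_append']
      exact ⟨hl, hL, fun a ha ha' =>
        Finset.disjoint_left.mp (disjoint_iff_disjoint_support.mp hdisj) (hlsupp a ha) (hLsupp a ha')⟩
    · intro a ha
      rw [hdisj.support_mul, Finset.mem_union]
      rcases List.mem_append.mp (List.flatten_cons ▸ ha) with ha | ha
      · exact .inl (hlsupp a ha)
      · exact .inr (hLsupp a ha)

theorem exists_eq_mul_isCycle_or_one (g : Perm α) :
    ∃ c d : Perm α, (c = 1 ∨ c.IsCycle) ∧ (d = 1 ∨ d.IsCycle) ∧ g = c * d := by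
  obtain ⟨L, hL, -, rfl⟩ := exists_prod_map_formPerm g
  have hheads : (L.filterMap List.head?).reverse.Nodup :=
    List.nodup_reverse.mpr ((L.filterMap_head?_sublist_flatten).nodup hL)
  refine ⟨(L.filterMap List.head?).reverse.formPerm, L.flatten.formPerm,
    hheads.formPerm_eq_one_or_isCycle, hL.formPerm_eq_one_or_isCycle, ?_⟩
  rw [List.formPerm_flatten hL, List.formPerm_reverse, inv_mul_cancel_left]

end Equiv.Perm

section DifferenceGraph

variable {V τ : Type*} [DecidableEq τ] {φ ψ : V → τ}

theorem exists_dv_ne_zero_iff (u : V) : (∃ i, dv φ ψ (u, i) ≠ 0) ↔ φ u ≠ ψ u := by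
  constructor
  · rintro ⟨i, hi⟩ hu
    simp [dv, hu] at hi
  · intro hu
    exact ⟨ψ u, by simp [dv, hu]⟩

theorem diffGraph_dv_adj_s7 {G : SimpleGraph V} {u v : V} (hadj : G.Adj u v) (hu : φ u ≠ ψ u)
    (hv : φ v ≠ ψ v) (hvu : φ v = ψ u) : (diffGraph G (dv φ ψ)).Adj u v :=
  ⟨hadj, ψ u, by rw [hvu] at hv; simp [dv, hu, hvu, Ne.symm hv], by simp [dv, hu]⟩

end DifferenceGraph

section CompleteGraph

variable {n : ℕ} {φ ψ : Fin n → Fin n} {f : Perm (Fin n)}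

theorem circuitStep_of_isCycle (hφ : Injective φ) (hf : f.IsCycle) (hψ : ∀ u, φ (f u) = ψ u) :
    CircuitStep n φ ψ := by
  have hmoved : ∀ u, φ u ≠ ψ u ↔ f u ≠ u := fun u => by
    rw [← hψ, hφ.ne_iff, ne_comm]
  have hreach : ∀ u, f u ≠ u → ∀ k : ℕ,
      (diffGraph (SimpleGraph.completeGraph (Fin n)) (dv φ ψ)).Reachable u ((f ^ k) u) := by
    intro u hu k
    induction k with
    | zero => rfl
    | succ k ih =>
      have hk : f ((f ^ k) u) ≠ (f ^ k) u := by
        simpa using (pow_apply_mem_support (n := k)).mpr (mem_support.mpr hu)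
      rw [pow_succ', mul_apply]
      exact ih.trans (diffGraph_dv_adj_s7 hk.symm ((hmoved _).mpr hk)
        ((hmoved _).mpr (f.injective.ne hk)) (hψ _)).reachable
  obtain ⟨u₀, hu₀, -⟩ := id hf
  refine ⟨fun h => (hmoved u₀).mpr hu₀ (congrFun h u₀), fun u w hu hw => ?_⟩
  rw [exists_dv_ne_zero_iff, hmoved] at hu hw
  obtain ⟨k, rfl⟩ := hf.exists_pow_eq hu hw
  exact hreach u hu k

theorem eq_or_circuitStep (hφ : Injective φ) (hf : f = 1 ∨ f.IsCycle) (hψ : ∀ u, φ (f u) = ψ u) :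
    φ = ψ ∨ CircuitStep n φ ψ := by
  rcases hf with rfl | hf
  · exact .inl (funext hψ)
  · exact .inr (circuitStep_of_isCycle hφ hf hψ)

end CompleteGraph

/-- On `K_n` with exactly `n` colors, any two proper colorings are joined by a proper
walk of length at most two: there is an intermediate proper coloring `ψ` such that each
consecutive difference is either zero or a circuit of the fractional coloring polytope. -/
theorem stmt7 (n : ℕ) (φ₁ φ₂ : Fin n → Fin n)
    (h₁ : Function.Injective φ₁) (h₂ : Function.Injective φ₂) :
    ∃ ψ : Fin n → Fin n, Function.Injective ψ ∧
      (φ₁ = ψ ∨ CircuitStep n φ₁ ψ) ∧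
      (ψ = φ₂ ∨ CircuitStep n ψ φ₂) := by
  set e₁ := Equiv.ofBijective φ₁ h₁.bijective_of_finite
  obtain ⟨c, d, hc, hd, hcd⟩ := exists_eq_mul_isCycle_or_one
    ((Equiv.ofBijective φ₂ h₂.bijective_of_finite).trans e₁.symm)
  refine ⟨φ₁ ∘ c, h₁.comp c.injective, eq_or_circuitStep h₁ hc fun _ => rfl,
    eq_or_circuitStep (h₁.comp c.injective) hd fun u => ?_⟩
  change φ₁ ((c * d) u) = φ₂ u
  rw [← hcd]
  exact e₁.apply_symm_apply (φ₂ u)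
end

section
/- Let G = (V,E) be a simple graph, B the rank-inequality matrix with rows ∑_{e ∈ E(G[U])} x(e) over all nonempty U ⊆ V, and g : E → ℝ a mixed-sign vector. If there exists λ ≥ 0 and an edge e ∈ supp(g) such that y = g − λ·1_e satisfies supp(By) ⊊ supp(Bg), then e is contained in no balanced set, where U ⊆ V is balanced (w.r.t. g) if ∑_{f ∈ E(G[U])} g(f) = 0. Conversely, if an edge e ∈ supp(g) lies in no balanced set, then dropping e (setting its entry to 0) yields a vector of strictly reduced support with respect to B. -/
/-- The row of the rank-inequality matrix indexed by `U ⊆ V`, applied to `g`: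
`∑_{e ∈ E(G[U])} g(e)`. -/
def rowSum {V : Type*} [Fintype V] [DecidableEq V] (G : SimpleGraph V) [DecidableRel G.Adj]
    (g : G.edgeSet → ℝ) (U : Finset V) : ℝ :=
  ∑ e : G.edgeSet, if ∀ v ∈ (e : Sym2 V), v ∈ U then g e else 0

/-- The support of `B g` for the rank-inequality matrix `B`: the nonempty sets `U` whose
rank row evaluates to a nonzero value on `g`. -/
def Bsupp {V : Type*} [Fintype V] [DecidableEq V] (G : SimpleGraph V) [DecidableRel G.Adj]
    (g : G.edgeSet → ℝ) : Set (Finset V) :=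
  {U | U.Nonempty ∧ rowSum G g U ≠ 0}

/-- A circuit of the rank-inequality system: a nonzero vector `g` such that `B g` is
support-minimal over `{B x : x ≠ 0}`. -/
def IsCircuit {V : Type*} [Fintype V] [DecidableEq V] (G : SimpleGraph V) [DecidableRel G.Adj]
    (g : G.edgeSet → ℝ) : Prop :=
  g ≠ 0 ∧ ∀ y : G.edgeSet → ℝ, y ≠ 0 → ¬ Bsupp G y ⊂ Bsupp G g

/-- The unit vector supported on the edge `e`. -/
def unitVec {V : Type*} [DecidableEq V] (G : SimpleGraph V) (e : G.edgeSet) :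
    G.edgeSet → ℝ :=
  fun f => if f = e then 1 else 0

/-- The spanning subgraph of `G` with edge set `R`. -/
def edgeSub {V : Type*} (G : SimpleGraph V) (R : Set G.edgeSet) : SimpleGraph V where
  Adj u v := u ≠ v ∧ ∃ e ∈ R, (e : Sym2 V) = s(u, v)
  symm := ⟨by
    rintro u v ⟨huv, e, heR, he⟩
    exact ⟨huv.symm, e, heR, by rw [he, Sym2.eq_swap]⟩⟩
  loopless := ⟨by rintro v ⟨hv, _⟩; exact hv rfl⟩

/-!
Subtracting `λ • 1_e` lowers exactly the rows `U ⊇ e` by `λ`. If the support shrinks strictly,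
`λ ≠ 0`, so a balanced `U ⊇ e` would become a new nonzero row. Conversely, when no `U ⊇ e` is
balanced, dropping `e` (that is, `λ = g e`) keeps every row of the support nonzero, while the row
of the endpoints of `e`, equal to `g e`, vanishes.
-/

theorem Sym2.eq_mk_of_forall_mem {V : Type*} {u v : V} {z : Sym2 V} (hz : ¬ z.IsDiag)
    (h : ∀ w ∈ z, w = u ∨ w = v) : z = s(u, v) := by
  induction z using Sym2.ind with
  | h a b =>
    rw [Sym2.mk_isDiag_iff] at hz
    rcases h a (Sym2.mem_mk_left a b) with rfl | rfl <;>
      rcases h b (Sym2.mem_mk_right a b) with rfl | rfl <;>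
      simp_all [Sym2.eq_swap]

section RankRows

variable {V : Type*} [Fintype V] [DecidableEq V] (G : SimpleGraph V) [DecidableRel G.Adj]

theorem rowSum_sub (g h : G.edgeSet → ℝ) (U : Finset V) :
    rowSum G (g - h) U = rowSum G g U - rowSum G h U := by
  simp only [rowSum, ← Finset.sum_sub_distrib, Pi.sub_apply]
  exact Finset.sum_congr rfl fun f _ => by split_ifs <;> simp

theorem rowSum_smul (c : ℝ) (g : G.edgeSet → ℝ) (U : Finset V) :
    rowSum G (c • g) U = c * rowSum G g U := by
  simp only [rowSum, Finset.mul_sum, Pi.smul_apply, smul_eq_mul, mul_ite, mul_zero]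

theorem rowSum_unitVec (e : G.edgeSet) (U : Finset V) :
    rowSum G (unitVec G e) U = if ∀ v ∈ (e : Sym2 V), v ∈ U then 1 else 0 := by
  rw [rowSum, ← Fintype.sum_ite_eq' e fun _ => if ∀ v ∈ (e : Sym2 V), v ∈ U then (1 : ℝ) else 0]
  refine Finset.sum_congr rfl fun f _ => ?_
  by_cases hf : f = e <;> simp [unitVec, hf]

theorem rowSum_sub_smul_unitVec (g : G.edgeSet → ℝ) (e : G.edgeSet) (lam : ℝ) (U : Finset V) :
    rowSum G (g - lam • unitVec G e) U =
      rowSum G g U - if ∀ v ∈ (e : Sym2 V), v ∈ U then lam else 0 := by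
  rw [rowSum_sub, rowSum_smul, rowSum_unitVec, mul_ite, mul_one, mul_zero]

theorem rowSum_pair (g : G.edgeSet → ℝ) (e : G.edgeSet) {u v : V}
    (huv : (e : Sym2 V) = s(u, v)) : rowSum G g {u, v} = g e := by
  refine (Finset.sum_congr rfl fun f _ => if_congr ?_ rfl rfl).trans (Fintype.sum_ite_eq' e g)
  constructor
  · intro hf
    exact Subtype.ext <| huv ▸ Sym2.eq_mk_of_forall_mem (G.not_isDiag_of_mem_edgeSet f.2)
      fun w hw => by simpa using hf w hw
  · rintro rfl w hw
    rw [huv, Sym2.mem_iff] at hw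
    simpa using hw

theorem rowSum_ne_zero_of_Bsupp_sub_smul_unitVec_ssubset {g : G.edgeSet → ℝ} {e : G.edgeSet}
    {lam : ℝ} (hss : Bsupp G (g - lam • unitVec G e) ⊂ Bsupp G g) {U : Finset V}
    (hU : ∀ v ∈ (e : Sym2 V), v ∈ U) : rowSum G g U ≠ 0 := by
  intro hbal
  have hlam : lam ≠ 0 := by
    rintro rfl
    rw [zero_smul, sub_zero] at hss
    exact hss.ne rfl
  have hUne : U.Nonempty := ⟨_, hU _ (Sym2.out_fst_mem _)⟩
  have hnew : U ∈ Bsupp G (g - lam • unitVec G e) :=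
    ⟨hUne, by rwa [rowSum_sub_smul_unitVec, hbal, if_pos hU, zero_sub, neg_ne_zero]⟩
  exact (hss.subset hnew).2 hbal

theorem Bsupp_drop_ssubset {g : G.edgeSet → ℝ} {e : G.edgeSet} (hge : g e ≠ 0)
    (hunbal : ∀ U : Finset V, (∀ v ∈ (e : Sym2 V), v ∈ U) → rowSum G g U ≠ 0) :
    Bsupp G (fun f => if f = e then 0 else g f) ⊂ Bsupp G g := by
  have hdrop : (fun f => if f = e then 0 else g f) = g - g e • unitVec G e := by
    funext f
    by_cases hf : f = e <;> simp [hf, unitVec]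
  obtain ⟨u, v, huv⟩ : ∃ u v, (e : Sym2 V) = s(u, v) := ⟨_, _, (Quot.out_eq _).symm⟩
  have he_pair : ∀ w ∈ (e : Sym2 V), w ∈ ({u, v} : Finset V) := by
    intro w hw
    rw [huv, Sym2.mem_iff] at hw
    simpa using hw
  rw [hdrop, Set.ssubset_iff_of_subset]
  · refine ⟨{u, v}, ⟨⟨u, by simp⟩, by rwa [rowSum_pair G g e huv]⟩, fun hnew => hnew.2 ?_⟩
    rw [rowSum_sub_smul_unitVec, rowSum_pair G g e huv, if_pos he_pair, sub_self]
  · rintro U ⟨hUne, hrow⟩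
    refine ⟨hUne, ?_⟩
    by_cases hU : ∀ w ∈ (e : Sym2 V), w ∈ U
    · exact hunbal U hU
    · rwa [rowSum_sub_smul_unitVec, if_neg hU, sub_zero] at hrow

end RankRows

theorem stmt9_general {V : Type*} [Fintype V] [DecidableEq V] (G : SimpleGraph V)
    [DecidableRel G.Adj] (g : G.edgeSet → ℝ) :
    (∀ (e : G.edgeSet) (lam : ℝ), 0 ≤ lam → g e ≠ 0 →
      Bsupp G (g - lam • unitVec G e) ⊂ Bsupp G g →
      ∀ U : Finset V, (∀ v ∈ (e : Sym2 V), v ∈ U) → rowSum G g U ≠ 0) ∧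
    (∀ e : G.edgeSet, g e ≠ 0 →
      (∀ U : Finset V, (∀ v ∈ (e : Sym2 V), v ∈ U) → rowSum G g U ≠ 0) →
      Bsupp G (fun f => if f = e then 0 else g f) ⊂ Bsupp G g) :=
  ⟨fun _ _ _ _ hss _ hU => rowSum_ne_zero_of_Bsupp_sub_smul_unitVec_ssubset G hss hU,
    fun _ hge hunbal => Bsupp_drop_ssubset G hge hunbal⟩

/-- Lemma on single-edge drops: for a mixed-sign vector `g`, dropping a scaled unit
vector on edge `e` strictly reduces the support (w.r.t. the rank matrix `B`) only if `e`
is contained in no balanced set, and conversely an edge in no balanced set can be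
dropped to reduce the support. -/
theorem stmt9 {V : Type*} [Fintype V] [DecidableEq V] (G : SimpleGraph V)
    [DecidableRel G.Adj] (g : G.edgeSet → ℝ)
    (hmix : (∃ e, 0 < g e) ∧ (∃ e, g e < 0)) :
    (∀ (e : G.edgeSet) (lam : ℝ), 0 ≤ lam → g e ≠ 0 →
      Bsupp G (g - lam • unitVec G e) ⊂ Bsupp G g →
      ∀ U : Finset V, (∀ v ∈ (e : Sym2 V), v ∈ U) → rowSum G g U ≠ 0) ∧
    (∀ e : G.edgeSet, g e ≠ 0 →
      (∀ U : Finset V, (∀ v ∈ (e : Sym2 V), v ∈ U) → rowSum G g U ≠ 0) →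
      Bsupp G (fun f => if f = e then 0 else g f) ⊂ Bsupp G g) :=
  stmt9_general G g
end
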